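/- (Ehrenfeucht–Fraïssé game for hornALC.) For any finite vocabulary τ, any τ-structures 𝔄, 𝔅 with a ∈ dom(𝔄), b ∈ dom(𝔅), and any natural number ℓ: 𝔄,a ≤^ℓ_hornALC 𝔅,b if and only if 𝔄,{a} ⪯^ℓ_horn 𝔅,b. Consequently, 𝔄,a ≤_hornALC 𝔅,b if and only if 𝔄,{a} ⪯^ℓ_horn 𝔅,b for all ℓ. Moreover, if 𝔄 and 𝔅 are finite, then 𝔄,a ≤_hornALC 𝔅,b if and only if 𝔄,{a} ⪯_horn 𝔅,b. -/

import Mathlib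

/-- A τ-structure over domain `D`, for a vocabulary with concept names `Con`
(unary predicates) and role names `Rol` (binary predicates). -/
structure Str (Con Rol : Type) (D : Type) where
  conI : Con → Set D
  rolI : Rol → Set (D × D)

/-- ALC-concepts over the vocabulary `(Con, Rol)`. -/
inductive ALC (Con Rol : Type) where
  | top : ALC Con Rol
  | bot : ALC Con Rol
  | atomic : Con → ALC Con Rol
  | neg : ALC Con Rol → ALC Con Rol
  | disj : ALC Con Rol → ALC Con Rol → ALC Con Rol
  | conj : ALC Con Rol → ALC Con Rol → ALC Con Rol
  | impl : ALC Con Rol → ALC Con Rol → ALC Con Rol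
  | ex : Rol → ALC Con Rol → ALC Con Rol
  | all : Rol → ALC Con Rol → ALC Con Rol

variable {Con Rol D D1 D2 : Type}

/-- The extension `C^𝔄` of an ALC-concept in a structure. -/
def ALC.sem (M : Str Con Rol D) : ALC Con Rol → Set D
  | .top => Set.univ
  | .bot => ∅
  | .atomic A => M.conI A
  | .neg C => (C.sem M)ᶜ
  | .disj C C' => C.sem M ∪ C'.sem M
  | .conj C C' => C.sem M ∩ C'.sem M
  | .impl C C' => (C.sem M)ᶜ ∪ C'.sem M
  | .ex R C => {a | ∃ b, (a, b) ∈ M.rolI R ∧ b ∈ C.sem M}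
  | .all R C => {a | ∀ b, (a, b) ∈ M.rolI R → b ∈ C.sem M}

/-- The depth of an ALC-concept: maximal nesting of `∃R` and `∀R`. -/
def ALC.depth : ALC Con Rol → ℕ
  | .top | .bot | .atomic _ => 0
  | .neg C => C.depth
  | .disj C C' | .conj C C' | .impl C C' => max C.depth C'.depth
  | .ex _ C | .all _ C => C.depth + 1

/-- ELU-concepts: built from concept names and ⊤ using ⊓, ⊔ and ∃R only. -/
inductive ALC.IsELU : ALC Con Rol → Prop
  | top : IsELU .top
  | atomic (A : Con) : IsELU (.atomic A)
  | conj {C C' : ALC Con Rol} : IsELU C → IsELU C' → IsELU (.conj C C')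
  | disj {C C' : ALC Con Rol} : IsELU C → IsELU C' → IsELU (.disj C C')
  | ex (R : Rol) {C : ALC Con Rol} : IsELU C → IsELU (.ex R C)

/-- hornALC-concepts: `H ::= ⊥ | ⊤ | A | H⊓H' | L→H | ∃R.H | ∀R.H` with `L` an ELU-concept. -/
inductive ALC.IsHorn : ALC Con Rol → Prop
  | bot : IsHorn .bot
  | top : IsHorn .top
  | atomic (A : Con) : IsHorn (.atomic A)
  | conj {H H' : ALC Con Rol} : IsHorn H → IsHorn H' → IsHorn (.conj H H')
  | impl {L H : ALC Con Rol} : IsELU L → IsHorn H → IsHorn (.impl L H)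
  | ex (R : Rol) {H : ALC Con Rol} : IsHorn H → IsHorn (.ex R H)
  | all (R : Rol) {H : ALC Con Rol} : IsHorn H → IsHorn (.all R H)

/-- `S` is a simulation between `M` and `N`. -/
def IsSim (M : Str Con Rol D1) (N : Str Con Rol D2) (S : Set (D1 × D2)) : Prop :=
  ∀ a b, (a, b) ∈ S →
    (∀ A, a ∈ M.conI A → b ∈ N.conI A) ∧
    (∀ R a', (a, a') ∈ M.rolI R → ∃ b', (b, b') ∈ N.rolI R ∧ (a', b') ∈ S)

/-- `𝔄,a ⪯_sim 𝔅,b`: some simulation contains `(a,b)`. -/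
def Sim (M : Str Con Rol D1) (N : Str Con Rol D2) (a : D1) (b : D2) : Prop :=
  ∃ S, IsSim M N S ∧ (a, b) ∈ S

/-- The ℓ-round simulation relations `⪯^ℓ_sim`. -/
def SimL (M : Str Con Rol D1) (N : Str Con Rol D2) : ℕ → D1 → D2 → Prop
  | 0 => fun a b => ∀ A, a ∈ M.conI A → b ∈ N.conI A
  | ℓ + 1 => fun a b =>
      (∀ A, a ∈ M.conI A → b ∈ N.conI A) ∧
      ∀ R a', (a, a') ∈ M.rolI R → ∃ b', (b, b') ∈ N.rolI R ∧ SimL M N ℓ a' b'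

/-- `X R↑ Y`. -/
def relUp (R : Set (D1 × D1)) (X Y : Set D1) : Prop := ∀ a ∈ X, ∃ b ∈ Y, (a, b) ∈ R

/-- `X R↓ Y`. -/
def relDown (R : Set (D1 × D1)) (X Y : Set D1) : Prop := ∀ b ∈ Y, ∃ a ∈ X, (a, b) ∈ R

/-- `Z` is a Horn simulation between `M` and `N`. -/
def IsHornSim (M : Str Con Rol D1) (N : Str Con Rol D2) (Z : Set (Set D1 × D2)) : Prop :=
  ∀ X b, (X, b) ∈ Z →
    X.Nonempty ∧
    (∀ A, X ⊆ M.conI A → b ∈ N.conI A) ∧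
    (∀ R Y, relUp (M.rolI R) X Y →
        ∃ Y', Y' ⊆ Y ∧ ∃ b', (b, b') ∈ N.rolI R ∧ (Y', b') ∈ Z) ∧
    (∀ R b', (b, b') ∈ N.rolI R → ∃ Y, relDown (M.rolI R) X Y ∧ (Y, b') ∈ Z) ∧
    (∀ a ∈ X, Sim N M b a)

/-- `𝔄,X ⪯_horn 𝔅,b`: some Horn simulation contains `(X,b)`. -/
def HornSim (M : Str Con Rol D1) (N : Str Con Rol D2) (X : Set D1) (b : D2) : Prop :=
  ∃ Z, IsHornSim M N Z ∧ (X, b) ∈ Z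

/-- The ℓ-round Horn simulation relations `⪯^ℓ_horn`. -/
def HornSimL (M : Str Con Rol D1) (N : Str Con Rol D2) : ℕ → Set D1 → D2 → Prop
  | 0 => fun X b =>
      X.Nonempty ∧ (∀ A, X ⊆ M.conI A → b ∈ N.conI A) ∧ ∀ a ∈ X, SimL N M 0 b a
  | ℓ + 1 => fun X b =>
      (X.Nonempty ∧ (∀ A, X ⊆ M.conI A → b ∈ N.conI A) ∧ ∀ a ∈ X, SimL N M 0 b a) ∧
      (∀ R Y, relUp (M.rolI R) X Y →
          ∃ Y', Y' ⊆ Y ∧ ∃ b', (b, b') ∈ N.rolI R ∧ HornSimL M N ℓ Y' b') ∧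
      (∀ R b', (b, b') ∈ N.rolI R → ∃ Y, relDown (M.rolI R) X Y ∧ HornSimL M N ℓ Y b') ∧
      (∀ a ∈ X, SimL N M (ℓ + 1) b a)

/-- `𝔄,X ≤^ℓ_hornALC 𝔅,b`. -/
def leHornDepth (M : Str Con Rol D1) (N : Str Con Rol D2) (ℓ : ℕ) (X : Set D1) (b : D2) : Prop :=
  ∀ C : ALC Con Rol, C.IsHorn → C.depth ≤ ℓ → X ⊆ C.sem M → b ∈ C.sem N

/-- `𝔄,X ≤_hornALC 𝔅,b`. -/
def leHorn (M : Str Con Rol D1) (N : Str Con Rol D2) (X : Set D1) (b : D2) : Prop :=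
  ∀ C : ALC Con Rol, C.IsHorn → X ⊆ C.sem M → b ∈ C.sem N

/-- `𝔄,a ≤^ℓ_ELU 𝔅,b`. -/
def leELUDepth (M : Str Con Rol D1) (N : Str Con Rol D2) (ℓ : ℕ) (a : D1) (b : D2) : Prop :=
  ∀ C : ALC Con Rol, C.IsELU → C.depth ≤ ℓ → a ∈ C.sem M → b ∈ C.sem N

/-- `𝔄,a ≤_ELU 𝔅,b`. -/
def leELU (M : Str Con Rol D1) (N : Str Con Rol D2) (a : D1) (b : D2) : Prop :=
  ∀ C : ALC Con Rol, C.IsELU → a ∈ C.sem M → b ∈ C.sem N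

/-!
Soundness is an induction on hornALC-concepts. Completeness rests on finiteness: over a finite
vocabulary there are finitely many depth-`ℓ` types, so concepts of depth `≤ ℓ` have only finitely
many extensions, and every family of concepts closed under finite conjunctions has a strongest
member of depth `≤ ℓ`. The strongest ELU-concept `χ` of depth `≤ ℓ` true at `b'` defines the
elements that `ℓ`-round simulate `b'`, and a hornALC-concept `C` true on `Y ∩ χ^𝔄` yields the
hornALC-concept `χ → C`, true on all of `Y`. So Duplicator answers a forth move `X R↑ Y` with an
`R`-successor `b'` of `b` satisfying the strongest hornALC-concept true on `Y`, and a back move to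
`b'` with the `R`-successors of `X` in `χ^𝔄`. On finite structures the `ℓ`-round relations
stabilise, which yields a Horn simulation.
-/

namespace ALC

variable {Con Rol D : Type}

def conjList : List (ALC Con Rol) → ALC Con Rol
  | [] => .top
  | C :: l => .conj C (conjList l)

@[simp]
lemma mem_sem_conjList {M : Str Con Rol D} {l : List (ALC Con Rol)} {d : D} :
    d ∈ (conjList l).sem M ↔ ∀ C ∈ l, d ∈ C.sem M := by
  induction l with
  | nil => simp [conjList, sem]
  | cons C l ih => simp [conjList, sem, ih]

lemma depth_conjList_le {l : List (ALC Con Rol)} {n : ℕ} (h : ∀ C ∈ l, C.depth ≤ n) :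
    (conjList l).depth ≤ n := by
  induction l with
  | nil => simp [conjList, depth]
  | cons C l ih => simp_all [conjList, depth]

lemma IsELU.conjList {l : List (ALC Con Rol)} (h : ∀ C ∈ l, C.IsELU) :
    (ALC.conjList l).IsELU := by
  induction l with
  | nil => exact .top
  | cons C l ih => exact .conj (h C (by simp)) (ih fun C' hC' => h C' (by simp [hC']))

lemma IsHorn.conjList {l : List (ALC Con Rol)} (h : ∀ C ∈ l, C.IsHorn) :
    (ALC.conjList l).IsHorn := by
  induction l with
  | nil => exact .top
  | cons C l ih => exact .conj (h C (by simp)) (ih fun C' hC' => h C' (by simp [hC']))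

end ALC

def TypSp (Con Rol : Type) : ℕ → Type
  | 0 => Set Con
  | ℓ + 1 => Set Con × (Rol → Set (TypSp Con Rol ℓ))

instance TypSp.finite (Con Rol : Type) [Finite Con] [Finite Rol] (ℓ : ℕ) :
    Finite (TypSp Con Rol ℓ) := by
  induction ℓ with
  | zero => exact inferInstanceAs (Finite (Set Con))
  | succ ℓ ih => exact inferInstanceAs (Finite (Set Con × (Rol → Set (TypSp Con Rol ℓ))))

namespace Str

variable {Con Rol D : Type}

def typ (M : Str Con Rol D) : (ℓ : ℕ) → D → TypSp Con Rol ℓ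
  | 0, d => {A | d ∈ M.conI A}
  | ℓ + 1, d => ({A | d ∈ M.conI A}, fun R => M.typ ℓ '' {c | (d, c) ∈ M.rolI R})

lemma mem_conI_iff_of_typ_eq (M : Str Con Rol D) {ℓ : ℕ} {d d' : D}
    (h : M.typ ℓ d = M.typ ℓ d') (A : Con) : d ∈ M.conI A ↔ d' ∈ M.conI A := by
  cases ℓ with
  | zero => exact Set.ext_iff.1 h A
  | succ ℓ => exact Set.ext_iff.1 (congrArg Prod.fst h) A

lemma exists_rolI_typ_eq_of_typ_eq (M : Str Con Rol D) {ℓ : ℕ} {d d' c : D} {R : Rol}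
    (h : M.typ (ℓ + 1) d = M.typ (ℓ + 1) d') (hc : (d, c) ∈ M.rolI R) :
    ∃ c', (d', c') ∈ M.rolI R ∧ M.typ ℓ c' = M.typ ℓ c := by
  have hR : M.typ ℓ '' {c | (d, c) ∈ M.rolI R} = M.typ ℓ '' {c | (d', c) ∈ M.rolI R} :=
    congrFun (congrArg Prod.snd h) R
  obtain ⟨c', hc', hcc'⟩ : M.typ ℓ c ∈ M.typ ℓ '' {c | (d', c) ∈ M.rolI R} :=
    hR ▸ Set.mem_image_of_mem (M.typ ℓ) hc
  exact ⟨c', hc', hcc'⟩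

end Str

namespace ALC

variable {Con Rol D D1 D2 : Type}

lemma mem_sem_iff_of_typ_eq (M : Str Con Rol D) (C : ALC Con Rol) {ℓ : ℕ} (hC : C.depth ≤ ℓ)
    {d d' : D} (h : M.typ ℓ d = M.typ ℓ d') : d ∈ C.sem M ↔ d' ∈ C.sem M := by
  induction C generalizing ℓ d d' with
  | top | bot => rfl
  | atomic A => exact M.mem_conI_iff_of_typ_eq h A
  | neg C ih => exact not_congr (ih hC h)
  | disj C C' ih ih' =>
    exact or_congr (ih (le_of_max_le_left hC) h) (ih' (le_of_max_le_right hC) h)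
  | conj C C' ih ih' =>
    exact and_congr (ih (le_of_max_le_left hC) h) (ih' (le_of_max_le_right hC) h)
  | impl C C' ih ih' =>
    exact or_congr (not_congr (ih (le_of_max_le_left hC) h)) (ih' (le_of_max_le_right hC) h)
  | ex R C ih =>
    obtain ⟨ℓ, rfl⟩ : ∃ k, ℓ = k + 1 := ⟨ℓ - 1, by simp only [depth] at hC; omega⟩
    have hC : C.depth ≤ ℓ := Nat.le_of_succ_le_succ hC
    suffices ∀ {d d'}, M.typ (ℓ + 1) d = M.typ (ℓ + 1) d' →
        d ∈ (ex R C).sem M → d' ∈ (ex R C).sem M from ⟨this h, this h.symm⟩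
    rintro d d' h ⟨c, hc, hcC⟩
    obtain ⟨c', hc', hcc'⟩ := M.exists_rolI_typ_eq_of_typ_eq h hc
    exact ⟨c', hc', (ih hC hcc').2 hcC⟩
  | all R C ih =>
    obtain ⟨ℓ, rfl⟩ : ∃ k, ℓ = k + 1 := ⟨ℓ - 1, by simp only [depth] at hC; omega⟩
    have hC : C.depth ≤ ℓ := Nat.le_of_succ_le_succ hC
    suffices ∀ {d d'}, M.typ (ℓ + 1) d = M.typ (ℓ + 1) d' →
        d ∈ (all R C).sem M → d' ∈ (all R C).sem M from ⟨this h, this h.symm⟩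
    intro d d' h hd c' hc'
    obtain ⟨c, hc, hcc'⟩ := M.exists_rolI_typ_eq_of_typ_eq h.symm hc'
    exact (ih hC hcc').1 (hd c hc)

lemma sem_eq_preimage_image_typ (M : Str Con Rol D) (C : ALC Con Rol) {ℓ : ℕ}
    (hC : C.depth ≤ ℓ) : C.sem M = M.typ ℓ ⁻¹' (M.typ ℓ '' C.sem M) := by
  refine (Set.subset_preimage_image _ _).antisymm ?_
  rintro d ⟨d', hd', h⟩
  exact (mem_sem_iff_of_typ_eq M C hC h).1 hd'

lemma finite_image_sem_depth_le [Finite Con] [Finite Rol] (M : Str Con Rol D1)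
    (N : Str Con Rol D2) (ℓ : ℕ) :
    ((fun C : ALC Con Rol => (C.sem M, C.sem N)) '' {C | C.depth ≤ ℓ}).Finite := by
  refine (Set.finite_range fun q : Set (TypSp Con Rol ℓ) × Set (TypSp Con Rol ℓ) =>
    (M.typ ℓ ⁻¹' q.1, N.typ ℓ ⁻¹' q.2)).subset ?_
  rintro _ ⟨C, hC, rfl⟩
  exact ⟨(M.typ ℓ '' C.sem M, N.typ ℓ '' C.sem N), Prod.ext
    (sem_eq_preimage_image_typ M C hC).symm (sem_eq_preimage_image_typ N C hC).symm⟩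

/-- The strongest concept is the conjunction of one representative for each of the finitely many
pairs of extensions. -/
lemma exists_strongest [Finite Con] [Finite Rol] (M : Str Con Rol D1) (N : Str Con Rol D2)
    (ℓ : ℕ) (P : ALC Con Rol → Prop)
    (hP : ∀ l : List (ALC Con Rol), (∀ C ∈ l, P C) → P (conjList l)) :
    ∃ G, P G ∧ G.depth ≤ ℓ ∧
      ∀ C, P C → C.depth ≤ ℓ → G.sem M ⊆ C.sem M ∧ G.sem N ⊆ C.sem N := by
  set T := {C : ALC Con Rol | P C ∧ C.depth ≤ ℓ}
  set f := fun C : ALC Con Rol => (C.sem M, C.sem N)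
  obtain ⟨reps, hrepsT, hinj, himage⟩ := (Set.surjOn_image f T).exists_subset_injOn_image_eq
  have hfin : reps.Finite := Set.Finite.of_finite_image
    (himage ▸ (finite_image_sem_depth_le M N ℓ).subset (Set.image_mono fun _ hC => hC.2)) hinj
  have hmem : ∀ {C}, C ∈ hfin.toFinset.toList ↔ C ∈ reps := by simp
  refine ⟨conjList hfin.toFinset.toList, hP _ fun C hC => (hrepsT (hmem.1 hC)).1,
    depth_conjList_le fun C hC => (hrepsT (hmem.1 hC)).2, fun C hPC hdC => ?_⟩
  obtain ⟨C', hC', hsem⟩ : f C ∈ f '' reps := himage ▸ Set.mem_image_of_mem f ⟨hPC, hdC⟩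
  obtain ⟨hM, hN⟩ := Prod.mk.inj hsem
  exact ⟨fun d hd => hM ▸ mem_sem_conjList.1 hd C' (hmem.2 hC'),
    fun d hd => hN ▸ mem_sem_conjList.1 hd C' (hmem.2 hC')⟩

end ALC

section Simulation

variable {Con Rol D1 D2 : Type} {M : Str Con Rol D1} {N : Str Con Rol D2}

lemma SimL.of_succ {ℓ : ℕ} {a : D1} {b : D2} (h : SimL M N (ℓ + 1) a b) : SimL M N ℓ a b := by
  induction ℓ generalizing a b with
  | zero => exact h.1
  | succ ℓ ih =>
    exact ⟨h.1, fun R a' ha' => (h.2 R a' ha').imp fun _ hb' => ⟨hb'.1, ih hb'.2⟩⟩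

lemma SimL.antitone {a : D1} {b : D2} : Antitone fun ℓ => SimL M N ℓ a b :=
  antitone_nat_of_succ_le fun _ => SimL.of_succ

lemma Sim.simL {a : D1} {b : D2} (h : Sim M N a b) (ℓ : ℕ) : SimL M N ℓ a b := by
  obtain ⟨S, hS, hab⟩ := h
  induction ℓ generalizing a b with
  | zero => exact (hS a b hab).1
  | succ ℓ ih =>
    exact ⟨(hS a b hab).1,
      fun R a' ha' => ((hS a b hab).2 R a' ha').imp fun _ hb' => ⟨hb'.1, ih hb'.2⟩⟩

lemma SimL.leELUDepth {ℓ : ℕ} {a : D1} {b : D2} (h : SimL M N ℓ a b) :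
    leELUDepth M N ℓ a b := by
  intro C hC
  induction hC generalizing ℓ a b with
  | top => exact fun _ _ => trivial
  | atomic A =>
    intro _ ha
    cases ℓ with
    | zero => exact h A ha
    | succ ℓ => exact h.1 A ha
  | conj _ _ ih ih' =>
    exact fun hd ha => ⟨ih h (le_of_max_le_left hd) ha.1, ih' h (le_of_max_le_right hd) ha.2⟩
  | disj _ _ ih ih' =>
    exact fun hd ha => ha.imp (ih h (le_of_max_le_left hd)) (ih' h (le_of_max_le_right hd))
  | ex R _ ih =>
    rintro hd ⟨a', ha', ha'C⟩
    obtain ⟨ℓ, rfl⟩ : ∃ k, ℓ = k + 1 := ⟨ℓ - 1, by simp only [ALC.depth] at hd; omega⟩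
    obtain ⟨b', hb', hab'⟩ := h.2 R a' ha'
    exact ⟨b', hb', ih hab' (Nat.le_of_succ_le_succ hd) ha'C⟩

/-- Duplicator answers an `R`-successor `a'` of `a` with an `R`-successor of `b` satisfying the
strongest ELU-concept of depth `≤ ℓ` true at `a'`. -/
lemma simL_of_leELUDepth [Finite Con] [Finite Rol] {ℓ : ℕ} {a : D1} {b : D2}
    (h : leELUDepth M N ℓ a b) : SimL M N ℓ a b := by
  induction ℓ generalizing a b with
  | zero => exact fun A hA => h _ (.atomic A) le_rfl hA
  | succ ℓ ih =>
    refine ⟨fun A hA => h _ (.atomic A) (Nat.zero_le _) hA, fun R a' ha' => ?_⟩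
    obtain ⟨G, ⟨hG, ha'G⟩, hdG, hGmin⟩ :=
      ALC.exists_strongest M N ℓ (fun C => C.IsELU ∧ a' ∈ C.sem M)
        fun l hl => ⟨.conjList fun C hC => (hl C hC).1,
          ALC.mem_sem_conjList.2 fun C hC => (hl C hC).2⟩
    obtain ⟨b', hbb', hb'G⟩ := h (.ex R G) (.ex R hG) (Nat.succ_le_succ hdG) ⟨a', ha', ha'G⟩
    exact ⟨b', hbb', ih fun C hC hdC ha'C => (hGmin C ⟨hC, ha'C⟩ hdC).2 hb'G⟩

variable (M N) in
lemma exists_isELU_forall_simL [Finite Con] [Finite Rol] (ℓ : ℕ) (b : D2) :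
    ∃ χ : ALC Con Rol, χ.IsELU ∧ χ.depth ≤ ℓ ∧ b ∈ χ.sem N ∧
      ∀ a ∈ χ.sem M, SimL N M ℓ b a := by
  obtain ⟨χ, ⟨hχ, hbχ⟩, hdχ, hχmin⟩ :=
    ALC.exists_strongest N M ℓ (fun C => C.IsELU ∧ b ∈ C.sem N)
      fun l hl => ⟨.conjList fun C hC => (hl C hC).1,
        ALC.mem_sem_conjList.2 fun C hC => (hl C hC).2⟩
  exact ⟨χ, hχ, hdχ, hbχ, fun a ha =>
    simL_of_leELUDepth fun C hC hdC hbC => (hχmin C ⟨hC, hbC⟩ hdC).2 ha⟩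

lemma exists_forall_of_antitone {β : Type*} [Finite β] {Q : ℕ → β → Prop}
    (hQ : ∀ y, Antitone fun ℓ => Q ℓ y) (h : ∀ ℓ, ∃ y, Q ℓ y) : ∃ y, ∀ ℓ, Q ℓ y := by
  by_contra! hcon
  choose f hf using hcon
  cases nonempty_fintype β
  obtain ⟨y, hy⟩ := h (Finset.univ.sup f)
  exact hf y (hQ y (Finset.le_sup (Finset.mem_univ y)) hy)

lemma sim_of_forall_simL [Finite D2] {a : D1} {b : D2} (h : ∀ ℓ, SimL M N ℓ a b) :
    Sim M N a b := by
  refine ⟨{p | ∀ ℓ, SimL M N ℓ p.1 p.2}, fun a b hab => ⟨hab 0, fun R a' ha' => ?_⟩, h⟩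
  exact exists_forall_of_antitone (Q := fun ℓ b' => (b, b') ∈ N.rolI R ∧ SimL M N ℓ a' b')
    (fun _ _ _ hkl hb' => ⟨hb'.1, SimL.antitone hkl hb'.2⟩)
    (fun ℓ => (hab (ℓ + 1)).2 R a' ha') |>.imp fun _ hb' => ⟨(hb' 0).1, fun ℓ => (hb' ℓ).2⟩

end Simulation

section HornSimulation

variable {Con Rol D1 D2 : Type} {M : Str Con Rol D1} {N : Str Con Rol D2}
  {ℓ : ℕ} {X : Set D1} {b : D2}

lemma HornSimL.nonempty (h : HornSimL M N ℓ X b) : X.Nonempty :=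
  match ℓ, h with
  | 0, h => h.1
  | _ + 1, h => h.1.1

lemma HornSimL.mem_conI (h : HornSimL M N ℓ X b) {A : Con} (hX : X ⊆ M.conI A) :
    b ∈ N.conI A :=
  match ℓ, h with
  | 0, h => h.2.1 A hX
  | _ + 1, h => h.1.2.1 A hX

lemma HornSimL.simL (h : HornSimL M N ℓ X b) {a : D1} (ha : a ∈ X) : SimL N M ℓ b a :=
  match ℓ, h with
  | 0, h => h.2.2 a ha
  | _ + 1, h => h.2.2.2 a ha

lemma HornSimL.of_succ (h : HornSimL M N (ℓ + 1) X b) : HornSimL M N ℓ X b := by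
  induction ℓ generalizing X b with
  | zero => exact h.1
  | succ ℓ ih =>
    refine ⟨h.1, fun R Y hY => ?_, fun R b' hb' => ?_, fun a ha => (h.2.2.2 a ha).of_succ⟩
    · obtain ⟨Y', hY', b', hb', h'⟩ := h.2.1 R Y hY
      exact ⟨Y', hY', b', hb', ih h'⟩
    · obtain ⟨Y, hY, h'⟩ := h.2.2.1 R b' hb'
      exact ⟨Y, hY, ih h'⟩

lemma HornSimL.antitone : Antitone fun ℓ => HornSimL M N ℓ X b :=
  antitone_nat_of_succ_le fun _ => HornSimL.of_succ

lemma HornSimL.leHornDepth (h : HornSimL M N ℓ X b) : leHornDepth M N ℓ X b := by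
  intro C hC
  induction hC generalizing ℓ X b with
  | bot =>
    intro _ hX
    obtain ⟨a, ha⟩ := h.nonempty
    exact hX ha
  | top => exact fun _ _ => trivial
  | atomic A => exact fun _ hX => h.mem_conI hX
  | conj _ _ ih ih' =>
    exact fun hd hX => ⟨ih h (le_of_max_le_left hd) fun a ha => (hX ha).1,
      ih' h (le_of_max_le_right hd) fun a ha => (hX ha).2⟩
  | impl hL _ ih =>
    intro hd hX
    refine or_iff_not_imp_left.2 fun hbL => ih h (le_of_max_le_right hd) fun a ha => ?_
    have haL := (h.simL ha).leELUDepth _ hL (le_of_max_le_left hd) (not_not.1 hbL)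
    exact (hX ha).resolve_left (not_not.2 haL)
  | ex R _ ih =>
    intro hd hX
    obtain ⟨ℓ, rfl⟩ : ∃ k, ℓ = k + 1 := ⟨ℓ - 1, by simp only [ALC.depth] at hd; omega⟩
    obtain ⟨Y', hY', b', hbb', h'⟩ := h.2.1 R _ fun a ha =>
      let ⟨c, hac, hc⟩ := hX ha
      ⟨c, hc, hac⟩
    exact ⟨b', hbb', ih h' (Nat.le_of_succ_le_succ hd) hY'⟩
  | all R _ ih =>
    intro hd hX b' hbb'
    obtain ⟨ℓ, rfl⟩ : ∃ k, ℓ = k + 1 := ⟨ℓ - 1, by simp only [ALC.depth] at hd; omega⟩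
    obtain ⟨Y, hXY, h'⟩ := h.2.2.1 R b' hbb'
    refine ih h' (Nat.le_of_succ_le_succ hd) fun y hy => ?_
    obtain ⟨a, ha, hay⟩ := hXY y hy
    exact hX ha y hay

lemma HornSim.hornSimL (h : HornSim M N X b) (ℓ : ℕ) : HornSimL M N ℓ X b := by
  obtain ⟨Z, hZ, hXb⟩ := h
  induction ℓ generalizing X b with
  | zero =>
    obtain ⟨hne, hA, -, -, hsim⟩ := hZ X b hXb
    exact ⟨hne, hA, fun a ha => (hsim a ha).simL 0⟩
  | succ ℓ ih =>
    obtain ⟨hne, hA, hforth, hback, hsim⟩ := hZ X b hXb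
    refine ⟨⟨hne, hA, fun a ha => (hsim a ha).simL 0⟩, fun R Y hY => ?_, fun R b' hb' => ?_,
      fun a ha => (hsim a ha).simL _⟩
    · obtain ⟨Y', hY', b', hb', h'⟩ := hforth R Y hY
      exact ⟨Y', hY', b', hb', ih h'⟩
    · obtain ⟨Y, hY, h'⟩ := hback R b' hb'
      exact ⟨Y, hY, ih h'⟩

lemma hornSim_of_forall_hornSimL [Finite D1] [Finite D2] (h : ∀ ℓ, HornSimL M N ℓ X b) :
    HornSim M N X b := by
  refine ⟨{q | ∀ ℓ, HornSimL M N ℓ q.1 q.2}, fun X b hXb => ?_, h⟩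
  refine ⟨(hXb 0).nonempty, fun A hA => (hXb 0).mem_conI hA, fun R Y hY => ?_, fun R b' hb' => ?_,
    fun a ha => sim_of_forall_simL fun ℓ => (hXb ℓ).simL ha⟩
  · obtain ⟨⟨Y', b'⟩, h'⟩ := exists_forall_of_antitone
      (Q := fun ℓ (q : Set D1 × D2) => q.1 ⊆ Y ∧ (b, q.2) ∈ N.rolI R ∧ HornSimL M N ℓ q.1 q.2)
      (fun _ _ _ hkl hq => ⟨hq.1, hq.2.1, HornSimL.antitone hkl hq.2.2⟩)
      fun ℓ => by
        obtain ⟨Y', hY', b', hb', h'⟩ := (hXb (ℓ + 1)).2.1 R Y hY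
        exact ⟨(Y', b'), hY', hb', h'⟩
    exact ⟨Y', (h' 0).1, b', (h' 0).2.1, fun ℓ => (h' ℓ).2.2⟩
  · obtain ⟨Y, h'⟩ := exists_forall_of_antitone
      (Q := fun ℓ Y => relDown (M.rolI R) X Y ∧ HornSimL M N ℓ Y b')
      (fun _ _ _ hkl hq => ⟨hq.1, HornSimL.antitone hkl hq.2⟩)
      fun ℓ => (hXb (ℓ + 1)).2.2.1 R b' hb'
    exact ⟨Y, (h' 0).1, fun ℓ => (h' ℓ).2⟩

lemma leHornDepth.nonempty (h : leHornDepth M N ℓ X b) : X.Nonempty := by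
  by_contra hX
  exact h .bot .bot (Nat.zero_le _) (Set.not_nonempty_iff_eq_empty.1 hX ▸ Set.empty_subset _)

lemma leHornDepth_inter_simL [Finite Con] [Finite Rol] {Y : Set D1}
    (h : ∀ L H : ALC Con Rol, L.IsELU → H.IsHorn → L.depth ≤ ℓ → H.depth ≤ ℓ →
      Y ⊆ (L.impl H).sem M → b ∈ (L.impl H).sem N) :
    leHornDepth M N ℓ (Y ∩ {y | SimL N M ℓ b y}) b := by
  obtain ⟨χ, hχ, hdχ, hbχ, hχsim⟩ := exists_isELU_forall_simL M N ℓ b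
  intro C hC hdC hYC
  refine (h χ C hχ hC hdχ hdC fun y hy => ?_).resolve_left (not_not.2 hbχ)
  by_cases hyχ : y ∈ χ.sem M
  · exact Or.inr (hYC ⟨hy, hχsim y hyχ⟩)
  · exact Or.inl hyχ

lemma hornSimL_of_leHornDepth [Finite Con] [Finite Rol] (hle : leHornDepth M N ℓ X b)
    (hsim : ∀ a ∈ X, SimL N M ℓ b a) : HornSimL M N ℓ X b := by
  induction ℓ generalizing X b with
  | zero => exact ⟨hle.nonempty, fun A hA => hle _ (.atomic A) le_rfl hA, hsim⟩
  | succ ℓ ih =>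
    have restrict : ∀ {Y : Set D1} {b'}, leHornDepth M N ℓ (Y ∩ {y | SimL N M ℓ b' y}) b' →
        HornSimL M N ℓ (Y ∩ {y | SimL N M ℓ b' y}) b' := fun h => ih h fun _ hy => hy.2
    refine ⟨⟨hle.nonempty, fun A hA => hle _ (.atomic A) (Nat.zero_le _) hA,
      fun a ha => (hsim a ha).1⟩, fun R Y hXY => ?_, fun R b' hbb' => ?_, hsim⟩
    · obtain ⟨G, ⟨hG, hYG⟩, hdG, hGmin⟩ :=
        ALC.exists_strongest M N ℓ (fun C => C.IsHorn ∧ Y ⊆ C.sem M)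
          fun l hl => ⟨.conjList fun C hC => (hl C hC).1,
            fun y hy => ALC.mem_sem_conjList.2 fun C hC => (hl C hC).2 hy⟩
      obtain ⟨b', hbb', hb'G⟩ := hle (.ex R G) (.ex R hG) (Nat.succ_le_succ hdG) fun a ha =>
        let ⟨y, hy, hay⟩ := hXY a ha
        ⟨y, hay, hYG hy⟩
      refine ⟨_, Set.inter_subset_left, b', hbb', restrict (leHornDepth_inter_simL ?_)⟩
      exact fun L H hL hH hdL hdH hY => (hGmin _ ⟨.impl hL hH, hY⟩ (max_le hdL hdH)).2 hb'G
    · refine ⟨{y | ∃ a ∈ X, (a, y) ∈ M.rolI R} ∩ _, fun y hy => hy.1,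
        restrict (leHornDepth_inter_simL ?_)⟩
      exact fun L H hL hH hdL hdH hY => hle (.all R (.impl L H)) (.all R (.impl hL hH))
        (Nat.succ_le_succ (max_le hdL hdH)) (fun a ha y hay => hY ⟨a, ha, hay⟩) b' hbb'

lemma simL_of_leHornDepth_singleton [Finite Con] [Finite Rol] {a : D1}
    (h : leHornDepth M N ℓ {a} b) : SimL N M ℓ b a := by
  obtain ⟨_, rfl, hsim⟩ := (leHornDepth_inter_simL fun L H hL hH hdL hdH =>
    h (.impl L H) (.impl hL hH) (max_le hdL hdH)).nonempty
  exact hsim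

lemma leHorn_iff_forall_leHornDepth : leHorn M N X b ↔ ∀ ℓ, leHornDepth M N ℓ X b :=
  ⟨fun h _ C hC _ => h C hC, fun h C hC => h C.depth C hC le_rfl⟩

end HornSimulation

theorem hornALC_ef_game_general {Con Rol : Type} [Fintype Con] [Fintype Rol]
    {D1 D2 : Type}
    (M : Str Con Rol D1) (N : Str Con Rol D2) (a : D1) (b : D2) :
    (∀ ℓ : ℕ, leHornDepth M N ℓ {a} b ↔ HornSimL M N ℓ {a} b) ∧
    (leHorn M N {a} b ↔ ∀ ℓ : ℕ, HornSimL M N ℓ {a} b) ∧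
    (Finite D1 → Finite D2 → (leHorn M N {a} b ↔ HornSim M N {a} b)) := by
  have bounded (ℓ : ℕ) : leHornDepth M N ℓ {a} b ↔ HornSimL M N ℓ {a} b :=
    ⟨fun h => hornSimL_of_leHornDepth h fun _ ha => ha ▸ simL_of_leHornDepth_singleton h,
      HornSimL.leHornDepth⟩
  have unbounded : leHorn M N {a} b ↔ ∀ ℓ, HornSimL M N ℓ {a} b :=
    leHorn_iff_forall_leHornDepth.trans (forall_congr' bounded)
  refine ⟨bounded, unbounded, fun _ _ => ⟨fun h => ?_, fun h => unbounded.2 h.hornSimL⟩⟩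
  exact hornSim_of_forall_hornSimL (unbounded.1 h)

/-- **Ehrenfeucht–Fraïssé game for hornALC.**
For any finite vocabulary τ, pointed τ-structures `𝔄,a` and `𝔅,b`, and any `ℓ < ω`:
`𝔄,a ≤^ℓ_hornALC 𝔅,b` iff `𝔄,{a} ⪯^ℓ_horn 𝔅,b`.  Thus `𝔄,a ≤_hornALC 𝔅,b` iff
`𝔄,{a} ⪯^ℓ_horn 𝔅,b` for all `ℓ`.  If `𝔄` and `𝔅` are finite, then
`𝔄,a ≤_hornALC 𝔅,b` iff `𝔄,{a} ⪯_horn 𝔅,b`. -/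
theorem hornALC_ef_game {Con Rol : Type} [Fintype Con] [Fintype Rol]
    {D1 D2 : Type} [Nonempty D1] [Nonempty D2]
    (M : Str Con Rol D1) (N : Str Con Rol D2) (a : D1) (b : D2) :
    (∀ ℓ : ℕ, leHornDepth M N ℓ {a} b ↔ HornSimL M N ℓ {a} b) ∧
    (leHorn M N {a} b ↔ ∀ ℓ : ℕ, HornSimL M N ℓ {a} b) ∧
    (Finite D1 → Finite D2 → (leHorn M N {a} b ↔ HornSim M N {a} b)) :=
  hornALC_ef_game_general M N a b
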